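/- Let A, B, C be finite-dimensional real vector spaces, D = A × B × C, and X(D) the space of double-linear functions on D. Then every double-linear σ restricts on the core {(0,0,c) : c ∈ C} to a linear functional j(σ) ∈ C*, and the resulting map j : X(D) → C* is a surjective linear map whose kernel equals the image of the injection i : A*⊗B* → X(D) given by i(θ)(a,b,c) = θ(a⊗b); in particular 0 → A*⊗B* →i X(D) →j C* → 0 is exact. -/

import Mathlib

open Function Module

open Function Module

/-- A function on `A × B × C` is double-linear if it is linear in `(b, c)` for
each fixed `a`, and linear in `(a, c)` for each fixed `b`. -/
def IsDoubleLinear (A B C : Type*) [AddCommGroup A] [Module ℝ A]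
    [AddCommGroup B] [Module ℝ B] [AddCommGroup C] [Module ℝ C]
    (σ : A × B × C → ℝ) : Prop :=
  (∀ (a : A) (b₁ b₂ : B) (c₁ c₂ : C) (r : ℝ),
      σ (a, r • b₁ + b₂, r • c₁ + c₂) = r * σ (a, b₁, c₁) + σ (a, b₂, c₂)) ∧
  (∀ (a₁ a₂ : A) (b : B) (c₁ c₂ : C) (r : ℝ),
      σ (r • a₁ + a₂, b, r • c₁ + c₂) = r * σ (a₁, b, c₁) + σ (a₂, b, c₂))

/-- The space `X(D)` of double-linear functions on `D = A × B × C`. -/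
def XD (A B C : Type*) [AddCommGroup A] [Module ℝ A]
    [AddCommGroup B] [Module ℝ B] [AddCommGroup C] [Module ℝ C] :
    Submodule ℝ ((A × B × C) → ℝ) where
  carrier := {σ | IsDoubleLinear A B C σ}
  add_mem' := by
    rintro σ τ ⟨h1, h2⟩ ⟨g1, g2⟩
    refine ⟨fun a b₁ b₂ c₁ c₂ r => ?_, fun a₁ a₂ b c₁ c₂ r => ?_⟩
    · simp only [Pi.add_apply, h1 a b₁ b₂ c₁ c₂ r, g1 a b₁ b₂ c₁ c₂ r]; ring
    · simp only [Pi.add_apply, h2 a₁ a₂ b c₁ c₂ r, g2 a₁ a₂ b c₁ c₂ r]; ring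
  zero_mem' :=
    ⟨fun _ _ _ _ _ _ => by simp, fun _ _ _ _ _ _ => by simp⟩
  smul_mem' := by
    rintro t σ ⟨h1, h2⟩
    refine ⟨fun a b₁ b₂ c₁ c₂ r => ?_, fun a₁ a₂ b c₁ c₂ r => ?_⟩
    · simp only [Pi.smul_apply, smul_eq_mul, h1 a b₁ b₂ c₁ c₂ r]; ring
    · simp only [Pi.smul_apply, smul_eq_mul, h2 a₁ a₂ b c₁ c₂ r]; ring

/-!
A double-linear `σ` splits as `σ (a, b, c) = σ (a, b, 0) + σ (0, 0, c)`, where `(a, b) ↦ σ (a, b, 0)`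
is bilinear and `c ↦ σ (0, 0, c)` is linear, and conversely every such sum is double-linear. So
`X(D) ≃ Bil(A, B) × C*`, with `j` the second projection; `i` is the first inclusion composed with
`A* ⊗ B* ≃ (A ⊗ B)* ≃ Bil(A, B)`, and the sequence is the split one
`0 → Bil(A, B) → Bil(A, B) × C* → C* → 0`.
-/

def LinearMap.ofMapSMulAdd {R M N : Type*} [Semiring R] [AddCommMonoid M] [AddCommGroup N]
    [Module R M] [Module R N] (f : M → N) (hf : ∀ (r : R) (x y : M), f (r • x + y) = r • f x + f y) :
    M →ₗ[R] N where
  toFun := f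
  map_add' x y := by simpa using hf 1 x y
  map_smul' r x := by
    have h0 : f 0 = 0 := by simpa using hf 1 0 0
    simpa [h0] using hf r x 0

namespace TensorProduct

variable (R M N : Type*) [CommRing R] [AddCommGroup M] [Module R M] [AddCommGroup N] [Module R N]
  [Module.Finite R M] [Module.Finite R N] [Module.Free R M] [Module.Free R N]

noncomputable def dualEquivBilin : Dual R M ⊗[R] Dual R N ≃ₗ[R] (M →ₗ[R] N →ₗ[R] R) :=
  (dualDistribEquiv R M N).trans (lift.equiv (RingHom.id R) M N R).symm

variable {R M N}

@[simp]
lemma dualEquivBilin_tmul_apply (f : Dual R M) (g : Dual R N) (m : M) (n : N) :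
    dualEquivBilin R M N (f ⊗ₜ g) m n = f m * g n := by
  simp [dualEquivBilin]

end TensorProduct

section DoubleLinear

variable {A B C : Type*} [AddCommGroup A] [Module ℝ A] [AddCommGroup B] [Module ℝ B]
  [AddCommGroup C] [Module ℝ C]

namespace IsDoubleLinear

variable {σ : A × B × C → ℝ}

def sliceFst (h : IsDoubleLinear A B C σ) (a : A) : B × C →ₗ[ℝ] ℝ :=
  LinearMap.ofMapSMulAdd (fun p => σ (a, p.1, p.2)) fun r x y => h.1 a x.1 y.1 x.2 y.2 r

def sliceSnd (h : IsDoubleLinear A B C σ) (b : B) : A × C →ₗ[ℝ] ℝ :=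
  LinearMap.ofMapSMulAdd (fun p => σ (p.1, b, p.2)) fun r x y => h.2 x.1 y.1 b x.2 y.2 r

@[simp]
lemma sliceFst_apply (h : IsDoubleLinear A B C σ) (a : A) (p : B × C) :
    h.sliceFst a p = σ (a, p.1, p.2) :=
  rfl

@[simp]
lemma sliceSnd_apply (h : IsDoubleLinear A B C σ) (b : B) (p : A × C) :
    h.sliceSnd b p = σ (p.1, b, p.2) :=
  rfl

lemma apply_eq_add (h : IsDoubleLinear A B C σ) (a : A) (b : B) (c : C) :
    σ (a, b, c) = σ (a, b, 0) + σ (0, 0, c) := by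
  have hb := (h.sliceFst a).map_add (b, 0) (0, c)
  have ha := (h.sliceSnd 0).map_add (a, 0) (0, c)
  have h0 := (h.sliceFst a).map_zero
  simp only [sliceFst_apply, sliceSnd_apply, Prod.mk_add_mk, add_zero, zero_add, Prod.fst_zero,
    Prod.snd_zero] at hb ha h0
  rw [hb, ha, h0, zero_add]

end IsDoubleLinear

namespace XD

lemma isDoubleLinear (σ : XD A B C) : IsDoubleLinear A B C σ :=
  σ.2

def toBilin : XD A B C →ₗ[ℝ] A →ₗ[ℝ] B →ₗ[ℝ] ℝ where
  toFun σ := LinearMap.ofMapSMulAdd (fun a => (isDoubleLinear σ).sliceFst a ∘ₗ LinearMap.inl ℝ B C)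
    fun r a₁ a₂ => by
      ext b
      simpa using (isDoubleLinear σ).2 a₁ a₂ b 0 0 r
  map_add' _ _ := rfl
  map_smul' _ _ := rfl

@[simp]
lemma toBilin_apply (σ : XD A B C) (a : A) (b : B) : toBilin σ a b = (σ : A × B × C → ℝ) (a, b, 0) :=
  rfl

def toCore : XD A B C →ₗ[ℝ] C →ₗ[ℝ] ℝ where
  toFun σ := (isDoubleLinear σ).sliceFst 0 ∘ₗ LinearMap.inr ℝ B C
  map_add' _ _ := rfl
  map_smul' _ _ := rfl

@[simp]
lemma toCore_apply (σ : XD A B C) (c : C) : toCore σ c = (σ : A × B × C → ℝ) (0, 0, c) :=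
  rfl

def ofProd : (A →ₗ[ℝ] B →ₗ[ℝ] ℝ) × (C →ₗ[ℝ] ℝ) →ₗ[ℝ] XD A B C where
  toFun p := ⟨fun x => p.1 x.1 x.2.1 + p.2 x.2.2, by
    refine ⟨fun a b₁ b₂ c₁ c₂ r => ?_, fun a₁ a₂ b c₁ c₂ r => ?_⟩ <;>
      simp only [map_add, map_smul, LinearMap.add_apply, LinearMap.smul_apply, smul_eq_mul] <;>
      ring⟩
  map_add' _ _ := by
    ext
    simp only [Submodule.coe_add, Pi.add_apply, Prod.fst_add, Prod.snd_add, LinearMap.add_apply]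
    ring
  map_smul' _ _ := by
    ext
    simp only [SetLike.val_smul, Pi.smul_apply, Prod.smul_fst, Prod.smul_snd, LinearMap.smul_apply,
      smul_eq_mul, RingHom.id_apply]
    ring

@[simp]
lemma ofProd_apply (p : (A →ₗ[ℝ] B →ₗ[ℝ] ℝ) × (C →ₗ[ℝ] ℝ)) (a : A) (b : B) (c : C) :
    (ofProd p : A × B × C → ℝ) (a, b, c) = p.1 a b + p.2 c :=
  rfl

def equivProd : XD A B C ≃ₗ[ℝ] (A →ₗ[ℝ] B →ₗ[ℝ] ℝ) × (C →ₗ[ℝ] ℝ) where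
  __ := toBilin.prod toCore
  invFun := ofProd
  left_inv σ := by
    ext ⟨a, b, c⟩
    exact ((isDoubleLinear σ).apply_eq_add a b c).symm
  right_inv p := by
    change (toBilin (ofProd p), toCore (ofProd p)) = p
    ext <;> simp

lemma toCore_eq_snd_comp_equivProd :
    toCore = LinearMap.snd ℝ _ _ ∘ₗ (equivProd (A := A) (B := B) (C := C)).toLinearMap :=
  rfl

lemma toCore_surjective : Surjective (toCore (A := A) (B := B) (C := C)) := by
  rw [toCore_eq_snd_comp_equivProd, LinearMap.coe_comp]
  exact LinearMap.snd_surjective.comp equivProd.surjective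

lemma range_ofProd_comp_inl :
    LinearMap.range (ofProd ∘ₗ LinearMap.inl ℝ (A →ₗ[ℝ] B →ₗ[ℝ] ℝ) (C →ₗ[ℝ] ℝ)) =
      LinearMap.ker toCore := by
  have hof : ofProd = (equivProd (A := A) (B := B) (C := C)).symm.toLinearMap := rfl
  rw [toCore_eq_snd_comp_equivProd, hof, LinearMap.ker_comp, LinearMap.range_comp,
    LinearMap.range_inl, Submodule.map_equiv_eq_comap_symm, LinearEquiv.symm_symm]

end XD

end DoubleLinear

theorem stmt5 (A B C : Type*)
    [AddCommGroup A] [Module ℝ A] [FiniteDimensional ℝ A]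
    [AddCommGroup B] [Module ℝ B] [FiniteDimensional ℝ B]
    [AddCommGroup C] [Module ℝ C] :
    ∃ jmap : XD A B C →ₗ[ℝ] (C →ₗ[ℝ] ℝ),
      (∀ (σ : XD A B C) (c : C), jmap σ c = (σ : (A × B × C) → ℝ) (0, 0, c)) ∧
      Surjective jmap ∧
      ∃ imap : TensorProduct ℝ (A →ₗ[ℝ] ℝ) (B →ₗ[ℝ] ℝ) →ₗ[ℝ] XD A B C,
        (∀ (α : A →ₗ[ℝ] ℝ) (β : B →ₗ[ℝ] ℝ) (a : A) (b : B) (c : C),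
          ((imap (α ⊗ₜ[ℝ] β)) : (A × B × C) → ℝ) (a, b, c) = α a * β b) ∧
        Injective imap ∧ LinearMap.range imap = LinearMap.ker jmap := by
  let E := TensorProduct.dualEquivBilin ℝ A B
  refine ⟨XD.toCore, XD.toCore_apply, XD.toCore_surjective,
    XD.ofProd ∘ₗ LinearMap.inl ℝ _ _ ∘ₗ E.toLinearMap, fun α β a b c => by simp [E], ?_, ?_⟩
  · exact XD.equivProd.symm.injective.comp (LinearMap.inl_injective.comp E.injective)
  · rw [← LinearMap.comp_assoc, LinearMap.range_comp_of_range_eq_top _ E.range,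
      XD.range_ofProd_comp_inl]
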